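/- Let k₁ : M₁ → L and k₂ : M₂ → L be two compactifications of a frame L. Then there exists a frame homomorphism h : M₁ → M₂ with k₁ = k₂ ∘ h if and only if C_{k₁} ⊆ C_{k₂}, i.e. if and only if every compact regular frame L' and frame homomorphism f : L' → L such that ⊲_{k₁} is finer than f is also such that ⊲_{k₂} is finer than f. -/

import Mathlib

/-!
If `k₁ = k₂ ∘ h`, then `h` preserves `≺`, so the generators of `⊲_{k₁}` are generators of
`⊲_{k₂}`. Conversely, `⊲_{k₁}` is finer than `k₁` itself, so by assumption `⊲_{k₂}` is finer
than `k₁`; since every pair of `⊲_{k₂}` lies between `k₂ c` and `k₂ e` for some `c ≺ e`, each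
`y ≺ x` in `M₁` is separated by the image of some `c ≺ e` in `M₂`. Then
`h m = ⋁ {b | k₂ b ≤ k₁ y for some y ≺ m}` is a frame homomorphism with `k₂ ∘ h = k₁`: compactness
and regularity of `M₁` reduce joins to finite joins of elements well inside, and density of `k₂`
turns an inequality `k₂ b ≤ k₂ c` with `c ≺ d` into `b ≤ d`.
-/

/-- The well-inside relation of a frame: `b` is well inside `a` iff `bᶜ ⊔ a = ⊤`. -/
def WellInside {L : Type*} [Order.Frame L] (b a : L) : Prop := bᶜ ⊔ a = ⊤

/-- A frame is regular if every element is the join of the elements well inside it. -/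
def IsRegularFrame (L : Type*) [Order.Frame L] : Prop :=
  ∀ a : L, a = sSup {b | WellInside b a}

/-- A frame is compact if `⊤` is a compact element. -/
def IsCompactFrame (L : Type*) [Order.Frame L] : Prop :=
  ∀ S : Set L, ⊤ ≤ sSup S → ∃ T : Set L, T ⊆ S ∧ T.Finite ∧ ⊤ ≤ sSup T

/-- A relation on `P` is closed under conditions (1)–(5) of a strong inclusion. -/
def ClosedUnder15 {L : Type*} [Order.Frame L] (P : Set L) (r : L → L → Prop) : Prop :=
  (r ⊥ ⊥ ∧ r ⊤ ⊤) ∧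
  (∀ x a b y, x ∈ P → y ∈ P → x ≤ a → r a b → b ≤ y → r x y) ∧
  (∀ x a b, r x a → r x b → r x (a ⊓ b)) ∧
  (∀ x y a, r x a → r y a → r (x ⊔ y) a) ∧
  (∀ a b, r a b → r bᶜ aᶜ)

/-- The smallest relation containing `R` and closed under conditions (1)–(5) of a
strong inclusion on `P`: the intersection of all such relations. -/
def leastClosed15 {L : Type*} [Order.Frame L] (P : Set L) (R : L → L → Prop) :
    L → L → Prop :=
  fun x y => ∀ r : L → L → Prop, (∀ a b, R a b → r a b) → ClosedUnder15 P r → r x y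

/-- The strong inclusion associated with a compactification `k : M → L`. -/
def kIncl {M L : Type*} [Order.Frame M] [Order.Frame L] (k : FrameHom M L) :
    L → L → Prop :=
  leastClosed15 Set.univ
    (fun x y => ∃ a b : M, WellInside b a ∧ x = k b ∧ y = k a)

/-- The relation `r` on `L` is finer than the frame homomorphism `f : L' → L`. -/
def Finer {L' L : Type*} [Order.Frame L'] [Order.Frame L]
    (r : L → L → Prop) (f : FrameHom L' L) : Prop :=
  ∀ x y : L', WellInside y x → ∃ p p' : L, f y ≤ p ∧ r p p' ∧ p' ≤ f x

section WellInside

variable {L M : Type*} [Order.Frame L] [Order.Frame M] {a a' b b' : L}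

theorem wellInside_bot_left (a : L) : WellInside ⊥ a := by simp [WellInside]

theorem wellInside_top_right (b : L) : WellInside b ⊤ := by simp [WellInside]

theorem WellInside.mono (hb : b' ≤ b) (h : WellInside b a) (ha : a ≤ a') :
    WellInside b' a' := by
  rw [WellInside, eq_top_iff, ← h]
  exact sup_le_sup (compl_anti hb) ha

theorem WellInside.compl_compl_le (h : WellInside b a) : bᶜᶜ ≤ a :=
  calc bᶜᶜ = bᶜᶜ ⊓ (bᶜ ⊔ a) := by rw [h, inf_top_eq]
    _ = bᶜᶜ ⊓ a := by rw [inf_sup_left, compl_inf_self, bot_sup_eq]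
    _ ≤ a := inf_le_right

theorem WellInside.le (h : WellInside b a) : b ≤ a :=
  le_compl_compl.trans h.compl_compl_le

theorem WellInside.compl (h : WellInside b a) : WellInside aᶜ bᶜ := by
  rw [WellInside, eq_top_iff, ← h, sup_comm aᶜᶜ]
  exact sup_le_sup_left le_compl_compl _

theorem WellInside.sup_left (h : WellInside b a) (h' : WellInside b' a) :
    WellInside (b ⊔ b') a := by
  rw [WellInside, compl_sup, sup_inf_right, h, h', inf_top_eq]

theorem WellInside.inf_right (h : WellInside b a) (h' : WellInside b a') :
    WellInside b (a ⊓ a') := by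
  rw [WellInside, sup_inf_left, h, h', inf_top_eq]

theorem WellInside.sup (h : WellInside b a) (h' : WellInside b' a') :
    WellInside (b ⊔ b') (a ⊔ a') :=
  (h.mono le_rfl le_sup_left).sup_left (h'.mono le_rfl le_sup_right)

theorem WellInside.inf (h : WellInside b a) (h' : WellInside b' a') :
    WellInside (b ⊓ b') (a ⊓ a') :=
  (h.mono inf_le_left le_rfl).inf_right (h'.mono inf_le_right le_rfl)

theorem supClosed_wellInside (a : L) : SupClosed {b | WellInside b a} :=
  fun _ hb _ hb' => WellInside.sup_left hb hb'

theorem FrameHom.map_compl_le (f : FrameHom M L) (m : M) : f mᶜ ≤ (f m)ᶜ :=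
  le_compl_iff_disjoint_right.2 <| by rw [disjoint_iff, ← map_inf, compl_inf_self, map_bot]

theorem WellInside.map (f : FrameHom M L) {n m : M} (h : WellInside n m) :
    WellInside (f n) (f m) := by
  rw [WellInside, eq_top_iff, ← map_top f, ← h, map_sup]
  exact sup_le_sup_right (f.map_compl_le n) _

end WellInside

section DenseHom

variable {L M : Type*} [Order.Frame L] [Order.Frame M] {k : FrameHom M L}

theorem FrameHom.map_compl_of_dense_of_surjective (hd : ∀ m, k m = ⊥ → m = ⊥)
    (hs : Function.Surjective k) (m : M) : k mᶜ = (k m)ᶜ := by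
  refine (k.map_compl_le m).antisymm ?_
  obtain ⟨n, hn⟩ := hs (k m)ᶜ
  have hnm : n ⊓ m = ⊥ := hd _ <| by rw [map_inf, hn, compl_inf_self]
  rw [← hn]
  exact OrderHomClass.mono k (le_compl_iff_disjoint_right.2 (disjoint_iff.2 hnm))

theorem le_of_map_le_of_wellInside (hd : ∀ m, k m = ⊥ → m = ⊥) {n c d : M}
    (hnc : k n ≤ k c) (hcd : WellInside c d) : n ≤ d := by
  have hn : n ⊓ cᶜ = ⊥ := hd _ <| le_bot_iff.1 <|
    calc k (n ⊓ cᶜ) ≤ k (c ⊓ cᶜ) := by rw [map_inf, map_inf]; exact inf_le_inf_right _ hnc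
      _ = ⊥ := by rw [inf_compl_self, map_bot]
  exact (le_compl_iff_disjoint_right.2 (disjoint_iff.2 hn)).trans hcd.compl_compl_le

end DenseHom

section CompactRegular

variable {M : Type*} [Order.Frame M] {a y : M}

theorem IsCompactFrame.exists_finite_wellInside_sSup (hc : IsCompactFrame M) {Q : Set M}
    (h : WellInside y (sSup Q)) : ∃ T ⊆ Q, T.Finite ∧ WellInside y (sSup T) := by
  obtain ⟨T, hT, hfin, htop⟩ := hc (insert yᶜ Q) (by rw [sSup_insert, h])
  refine ⟨T ∩ Q, Set.inter_subset_right, hfin.inter_of_left Q, eq_top_iff.2 ?_⟩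
  refine htop.trans (sSup_le fun x hx => ?_)
  rcases hT hx with rfl | hxQ
  · exact le_sup_left
  · exact le_sup_of_le_right (le_sSup ⟨hx, hxQ⟩)

theorem IsRegularFrame.sSup_eq (hr : IsRegularFrame M) (Q : Set M) :
    sSup Q = sSup {c | ∃ q ∈ Q, WellInside c q} := by
  refine le_antisymm (sSup_le fun q hq => ?_)
    (sSup_le fun c ⟨q, hq, hcq⟩ => hcq.le.trans (le_sSup hq))
  rw [hr q]
  exact sSup_le fun c hcq => le_sSup ⟨q, hq, hcq⟩

theorem exists_wellInside_between (hc : IsCompactFrame M) (hr : IsRegularFrame M)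
    (h : WellInside y a) : ∃ c, WellInside y c ∧ WellInside c a := by
  rw [hr a] at h
  obtain ⟨T, hT, hfin, hyT⟩ := hc.exists_finite_wellInside_sSup h
  exact ⟨sSup T, hyT, (supClosed_wellInside a).sSup_mem hfin (wellInside_bot_left a) hT⟩

end CompactRegular

section Factorization

variable {L M₁ M₂ : Type*} [Order.Frame L] [Order.Frame M₁] [Order.Frame M₂]
  {k₁ : FrameHom M₁ L} {k₂ : FrameHom M₂ L}

def factorMap (k₁ : FrameHom M₁ L) (k₂ : FrameHom M₂ L) (m : M₁) : M₂ :=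
  sSup {b | ∃ y, WellInside y m ∧ k₂ b ≤ k₁ y}

theorem factorMap_mono : Monotone (factorMap k₁ k₂) :=
  fun _ _ hmn => sSup_le_sSup fun _ ⟨y, hy, hb⟩ => ⟨y, hy.mono le_rfl hmn, hb⟩

theorem factorMap_top : factorMap k₁ k₂ ⊤ = ⊤ :=
  top_le_iff.1 <| le_sSup ⟨⊤, wellInside_top_right ⊤, by rw [map_top, map_top]⟩

theorem factorMap_inf (m n : M₁) :
    factorMap k₁ k₂ (m ⊓ n) = factorMap k₁ k₂ m ⊓ factorMap k₁ k₂ n := by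
  refine le_antisymm (le_inf (factorMap_mono inf_le_left) (factorMap_mono inf_le_right)) ?_
  rw [factorMap, factorMap, sSup_inf_sSup]
  refine iSup₂_le fun ⟨b, b'⟩ ⟨⟨y, hy, hb⟩, ⟨y', hy', hb'⟩⟩ => le_sSup ⟨y ⊓ y', hy.inf hy', ?_⟩
  rw [map_inf, map_inf]
  exact inf_le_inf hb hb'

variable (hc : IsCompactFrame M₁) (hr : IsRegularFrame M₁)
  (href : ∀ y x : M₁, WellInside y x →
    ∃ c e : M₂, WellInside c e ∧ k₁ y ≤ k₂ c ∧ k₂ e ≤ k₁ x)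
include hc hr href

theorem exists_map_le_wellInside_factorMap {y m : M₁} (h : WellInside y m) :
    ∃ c, k₁ y ≤ k₂ c ∧ WellInside c (factorMap k₁ k₂ m) := by
  obtain ⟨y', hyy', hy'm⟩ := exists_wellInside_between hc hr h
  obtain ⟨c, e, hce, hyc, hey'⟩ := href y y' hyy'
  exact ⟨c, hyc, hce.mono le_rfl (le_sSup ⟨y', hy'm, hey'⟩)⟩

theorem map_factorMap (m : M₁) : k₂ (factorMap k₁ k₂ m) = k₁ m := by
  refine le_antisymm ?_ ?_
  · rw [factorMap, map_sSup]
    exact sSup_le fun _ ⟨b, ⟨y, hy, hb⟩, hbx⟩ => hbx ▸ hb.trans (OrderHomClass.mono k₁ hy.le)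
  · conv_lhs => rw [hr m, map_sSup]
    refine sSup_le fun _ ⟨y, hy, hyx⟩ => hyx ▸ ?_
    obtain ⟨c, hyc, hcm⟩ := exists_map_le_wellInside_factorMap hc hr href hy
    exact hyc.trans (OrderHomClass.mono k₂ hcm.le)

theorem factorMap_sSup (hd : ∀ b, k₂ b = ⊥ → b = ⊥) (Q : Set M₁) :
    factorMap k₁ k₂ (sSup Q) = sSup (factorMap k₁ k₂ '' Q) := by
  refine le_antisymm (sSup_le fun b ⟨y, hy, hb⟩ => ?_)
    (sSup_le fun _ ⟨q, hq, hqx⟩ => hqx ▸ factorMap_mono (le_sSup hq))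
  rw [hr.sSup_eq] at hy
  obtain ⟨T, hT, hfin, hyT⟩ := hc.exists_finite_wellInside_sSup hy
  have hcover : ∀ t ∈ T, ∃ c, k₁ t ≤ k₂ c ∧ WellInside c (sSup (factorMap k₁ k₂ '' Q)) := by
    intro t ht
    obtain ⟨q, hq, htq⟩ := hT ht
    obtain ⟨c, htc, hcq⟩ := exists_map_le_wellInside_factorMap hc hr href htq
    exact ⟨c, htc, hcq.mono le_rfl (le_sSup ⟨q, hq, rfl⟩)⟩
  choose! c hkc hcX using hcover
  refine le_of_map_le_of_wellInside hd (c := ⨆ t ∈ T, c t) ?_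
    ((supClosed_wellInside _).biSup_mem hfin (wellInside_bot_left _) hcX)
  calc k₂ b ≤ k₁ (sSup T) := hb.trans (OrderHomClass.mono k₁ hyT.le)
    _ = ⨆ t ∈ T, k₁ t := by rw [map_sSup, sSup_image]
    _ ≤ ⨆ t ∈ T, k₂ (c t) := iSup₂_mono hkc
    _ = k₂ (⨆ t ∈ T, c t) := (map_iSup₂ k₂ _).symm

def factorHom (hd : ∀ b, k₂ b = ⊥ → b = ⊥) : FrameHom M₁ M₂ where
  toFun := factorMap k₁ k₂
  map_inf' := factorMap_inf
  map_top' := factorMap_top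
  map_sSup' := factorMap_sSup hc hr href hd

theorem comp_factorHom (hd : ∀ b, k₂ b = ⊥ → b = ⊥) :
    k₂.comp (factorHom hc hr href hd) = k₁ :=
  FrameHom.ext (map_factorMap hc hr href)

end Factorization

section StrongInclusion

variable {L L' M : Type*} [Order.Frame L] [Order.Frame L'] [Order.Frame M]

theorem leastClosed15_mono {P : Set L} {R R' : L → L → Prop} (hR : ∀ x y, R x y → R' x y)
    {x y : L} (h : leastClosed15 P R x y) : leastClosed15 P R' x y :=
  fun r hr hcl => h r (fun a b hab => hr a b (hR a b hab)) hcl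

theorem kIncl_of_wellInside (k : FrameHom M L) {b a : M} (h : WellInside b a) :
    kIncl k (k b) (k a) :=
  fun _ hr _ => hr _ _ ⟨a, b, h, rfl, rfl⟩

theorem kIncl_comp_le (k : FrameHom M L) (h : FrameHom L' M) {x y : L}
    (hxy : kIncl (k.comp h) x y) : kIncl k x y :=
  leastClosed15_mono (fun _ _ ⟨a, b, hba, hx, hy⟩ => ⟨h a, h b, hba.map h, hx, hy⟩) hxy

theorem Finer.mono {r r' : L → L → Prop} (hr : ∀ x y, r x y → r' x y) {f : FrameHom L' L}
    (h : Finer r f) : Finer r' f :=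
  fun x y hyx => (h x y hyx).imp fun _ => .imp fun _ ⟨h₁, h₂, h₃⟩ => ⟨h₁, hr _ _ h₂, h₃⟩

theorem finer_kIncl_self (k : FrameHom M L) : Finer (kIncl k) k :=
  fun x y hyx => ⟨k y, k x, le_rfl, kIncl_of_wellInside k hyx, le_rfl⟩

/-- The generating pairs, enlarged as in condition (2), already satisfy (1)–(5); condition (5)
is where density and surjectivity of `k` enter, through `k mᶜ = (k m)ᶜ`. -/
theorem exists_wellInside_of_kIncl {k : FrameHom M L} (hd : ∀ m, k m = ⊥ → m = ⊥)
    (hs : Function.Surjective k) {x y : L} (h : kIncl k x y) :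
    ∃ a b : M, WellInside b a ∧ x ≤ k b ∧ k a ≤ y := by
  refine h (fun x y => ∃ a b : M, WellInside b a ∧ x ≤ k b ∧ k a ≤ y)
    (fun _ _ ⟨a, b, hba, hx, hy⟩ => ⟨a, b, hba, hx.le, hy.ge⟩) ⟨⟨?_, ?_⟩, ?_, ?_, ?_, ?_⟩
  · exact ⟨⊥, ⊥, wellInside_bot_left ⊥, bot_le, (map_bot k).le⟩
  · exact ⟨⊤, ⊤, wellInside_top_right ⊤, (map_top k).ge, le_top⟩
  · rintro x a b y - - hxa ⟨a', b', hba, hab, hba'⟩ hby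
    exact ⟨a', b', hba, hxa.trans hab, hba'.trans hby⟩
  · rintro x a b ⟨a₁, b₁, h₁, hx₁, ha₁⟩ ⟨a₂, b₂, h₂, hx₂, ha₂⟩
    refine ⟨a₁ ⊓ a₂, b₁ ⊓ b₂, h₁.inf h₂, ?_, ?_⟩
    · rw [map_inf]; exact le_inf hx₁ hx₂
    · rw [map_inf]; exact inf_le_inf ha₁ ha₂
  · rintro x y a ⟨a₁, b₁, h₁, hx₁, ha₁⟩ ⟨a₂, b₂, h₂, hy₂, ha₂⟩
    refine ⟨a₁ ⊔ a₂, b₁ ⊔ b₂, h₁.sup h₂, ?_, ?_⟩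
    · rw [map_sup]; exact sup_le_sup hx₁ hy₂
    · rw [map_sup]; exact sup_le ha₁ ha₂
  · rintro a b ⟨d, c, hcd, hac, hdb⟩
    refine ⟨cᶜ, dᶜ, hcd.compl, ?_, (k.map_compl_le c).trans (compl_anti hac)⟩
    rw [k.map_compl_of_dense_of_surjective hd hs]
    exact compl_anti hdb

end StrongInclusion

theorem compactification_le_iff_classes_subset_general
    {L M₁ M₂ : Type u} [Order.Frame L] [Order.Frame M₁] [Order.Frame M₂]
    (hM₁c : IsCompactFrame M₁) (hM₁r : IsRegularFrame M₁)
    (k₁ : FrameHom M₁ L)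
    (k₂ : FrameHom M₂ L) (hd₂ : ∀ a : M₂, k₂ a = ⊥ → a = ⊥)
    (hs₂ : Function.Surjective k₂) :
    (∃ h : FrameHom M₁ M₂, k₁ = k₂.comp h) ↔
      (∀ (L' : Type u) (_ : Order.Frame L'),
        IsCompactFrame L' → IsRegularFrame L' →
        ∀ f : FrameHom L' L, Finer (kIncl k₁) f → Finer (kIncl k₂) f) := by
  constructor
  · rintro ⟨h, rfl⟩ L' _ _ _ f hf
    exact hf.mono fun _ _ => kIncl_comp_le k₂ h
  · intro H
    have hF : Finer (kIncl k₂) k₁ := H M₁ inferInstance hM₁c hM₁r k₁ (finer_kIncl_self k₁)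
    have href : ∀ y x : M₁, WellInside y x →
        ∃ c e : M₂, WellInside c e ∧ k₁ y ≤ k₂ c ∧ k₂ e ≤ k₁ x := by
      intro y x hyx
      obtain ⟨p, p', hyp, hpp', hp'x⟩ := hF x y hyx
      obtain ⟨e, c, hce, hpc, hep'⟩ := exists_wellInside_of_kIncl hd₂ hs₂ hpp'
      exact ⟨c, e, hce, hyp.trans hpc, hep'.trans hp'x⟩
    exact ⟨factorHom hM₁c hM₁r href hd₂, (comp_factorHom hM₁c hM₁r href hd₂).symm⟩

/-- Two compactifications `k₁ : M₁ → L` and `k₂ : M₂ → L` satisfy `k₁ ≤ k₂`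
(i.e. `k₁` factors through `k₂`) iff `C_{k₁} ⊆ C_{k₂}`. -/
theorem compactification_le_iff_classes_subset
    {L M₁ M₂ : Type u} [Order.Frame L] [Order.Frame M₁] [Order.Frame M₂]
    (hM₁c : IsCompactFrame M₁) (hM₁r : IsRegularFrame M₁)
    (k₁ : FrameHom M₁ L) (hd₁ : ∀ a : M₁, k₁ a = ⊥ → a = ⊥)
    (hs₁ : Function.Surjective k₁)
    (hM₂c : IsCompactFrame M₂) (hM₂r : IsRegularFrame M₂)
    (k₂ : FrameHom M₂ L) (hd₂ : ∀ a : M₂, k₂ a = ⊥ → a = ⊥)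
    (hs₂ : Function.Surjective k₂) :
    (∃ h : FrameHom M₁ M₂, k₁ = k₂.comp h) ↔
      (∀ (L' : Type u) (_ : Order.Frame L'),
        IsCompactFrame L' → IsRegularFrame L' →
        ∀ f : FrameHom L' L, Finer (kIncl k₁) f → Finer (kIncl k₂) f) :=
  compactification_le_iff_classes_subset_general hM₁c hM₁r k₁ k₂ hd₂ hs₂
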